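/- arXiv:1403.7313 — 4 statements merged into one kernel-verified Lean document; each statement's English description precedes it below -/
import Mathlib

section
/- If f is analytic on the unit disk D with diameter of image Diam f(D) = sup_{z,w in D} |f(z)-f(w)| finite, then for every positive integer n, |f^(n)(0)|/n! ≤ (1/2)·Diam f(D). -/
/-! For `ω` with `ω ^ n = -1`, the function `z ↦ f z - f (ω z)` has `n`-th derivative
`2 f⁽ⁿ⁾(0)` at the origin, and its values have norm at most `Diam f(D)` because `z` and `ω z` both
lie in `D`. Cauchy's estimate on the circles `|z| = r < 1` and the limit `r → 1` give the bound. -/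

open Metric Filter Topology Nat

variable {F : Type*} [NormedAddCommGroup F] [NormedSpace ℂ F] [CompleteSpace F]

lemma Complex.exists_pow_eq_neg_one_and_norm_eq_one {n : ℕ} (hn : 0 < n) :
    ∃ ω : ℂ, ω ^ n = -1 ∧ ‖ω‖ = 1 := by
  obtain ⟨ω, hω⟩ := IsAlgClosed.exists_pow_nat_eq (-1 : ℂ) hn
  refine ⟨ω, hω, (pow_eq_one_iff_of_nonneg (norm_nonneg ω) hn.ne').1 ?_⟩
  rw [← norm_pow, hω, norm_neg, norm_one]

lemma mapsTo_const_mul_ball {𝕜 : Type*} [SeminormedRing 𝕜] {c : 𝕜} (hc : ‖c‖ ≤ 1) (R : ℝ) :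
    Set.MapsTo (c * ·) (ball (0 : 𝕜) R) (ball 0 R) := fun z hz => by
  rw [mem_ball_zero_iff] at hz ⊢
  calc ‖c * z‖ ≤ ‖c‖ * ‖z‖ := norm_mul_le c z
    _ ≤ ‖z‖ := mul_le_of_le_one_left (norm_nonneg z) hc
    _ < R := hz

lemma iteratedDeriv_sub_comp_const_mul {f : ℂ → F} {R : ℝ} (hR : 0 < R)
    (hf : DifferentiableOn ℂ f (ball 0 R)) {c : ℂ} (hc : ‖c‖ ≤ 1) (n : ℕ) :
    iteratedDeriv n (fun z => f z - f (c * z)) 0 = (1 - c ^ n) • iteratedDeriv n f 0 := by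
  have h0 : (0 : ℂ) ∈ ball 0 R := mem_ball_self hR
  have hfc : ContDiffOn ℂ n f (ball 0 R) := hf.contDiffOn isOpen_ball
  have hfc' : ContDiffOn ℂ n (fun z => f (c * z)) (ball 0 R) :=
    hfc.comp (contDiff_const.mul contDiff_id).contDiffOn (mapsTo_const_mul_ball hc R)
  rw [← iteratedDerivWithin_of_isOpen isOpen_ball h0,
    ← iteratedDerivWithin_of_isOpen isOpen_ball h0,
    show (fun z => f z - f (c * z)) = f - fun z => f (c * z) from rfl,
    iteratedDerivWithin_sub h0 isOpen_ball.uniqueDiffOn (hfc 0 h0) (hfc' 0 h0),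
    iteratedDerivWithin_comp_const_smul h0 isOpen_ball.uniqueDiffOn hfc c
      (mapsTo_const_mul_ball hc R), mul_zero, sub_smul, one_smul]

lemma norm_sub_comp_const_mul_le_diam {E : Type*} [SeminormedAddCommGroup E] {f : ℂ → E} {R : ℝ}
    (hbdd : Bornology.IsBounded (f '' ball 0 R))
    {c : ℂ} (hc : ‖c‖ ≤ 1) {z : ℂ} (hz : z ∈ ball 0 R) :
    ‖f z - f (c * z)‖ ≤ diam (f '' ball 0 R) := by
  rw [← dist_eq_norm]
  exact dist_le_diam_of_mem hbdd (Set.mem_image_of_mem f hz)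
    (Set.mem_image_of_mem f (mapsTo_const_mul_ball hc R hz))

lemma two_mul_norm_iteratedDeriv_le {f : ℂ → F} {R r : ℝ} (hr : 0 < r) (hrR : r < R)
    (hf : DifferentiableOn ℂ f (ball 0 R)) (hbdd : Bornology.IsBounded (f '' ball 0 R))
    {n : ℕ} (hn : 0 < n) :
    2 * ‖iteratedDeriv n f 0‖ ≤ n ! * diam (f '' ball 0 R) / r ^ n := by
  obtain ⟨ω, hωn, hω⟩ := Complex.exists_pow_eq_neg_one_and_norm_eq_one hn
  have hclosed : closedBall (0 : ℂ) r ⊆ ball 0 R := closedBall_subset_ball hrR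
  have hg : DifferentiableOn ℂ (fun z => f z - f (ω * z)) (ball 0 R) :=
    hf.sub (hf.comp (differentiable_id.const_mul ω).differentiableOn
      (mapsTo_const_mul_ball hω.le R))
  have hcauchy := Complex.norm_iteratedDeriv_le_of_forall_mem_sphere_norm_le n hr
    (hg.diffContOnCl_ball hclosed) fun z hz =>
      norm_sub_comp_const_mul_le_diam hbdd hω.le (hclosed (sphere_subset_closedBall hz))
  rwa [iteratedDeriv_sub_comp_const_mul (hr.trans hrR) hf hω.le, hωn, sub_neg_eq_add,
    one_add_one_eq_two, norm_smul, Complex.norm_two] at hcauchy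

lemma le_div_pow_of_forall_lt {a D R : ℝ} {n : ℕ} (hR : 0 < R)
    (h : ∀ r, 0 < r → r < R → a ≤ D / r ^ n) : a ≤ D / R ^ n := by
  have hlim : Tendsto (fun r : ℝ => D / r ^ n) (𝓝[<] R) (𝓝 (D / R ^ n)) :=
    ((continuousAt_const.div (continuousAt_id.pow n) (pow_ne_zero n hR.ne')).tendsto).mono_left
      nhdsWithin_le_nhds
  refine ge_of_tendsto hlim ?_
  filter_upwards [Ioo_mem_nhdsLT hR] with r hr using h r hr.1 hr.2

theorem norm_iteratedDeriv_div_factorial_le_diam {f : ℂ → F} {R : ℝ} (hR : 0 < R)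
    (hf : DifferentiableOn ℂ f (ball 0 R)) (hbdd : Bornology.IsBounded (f '' ball 0 R))
    {n : ℕ} (hn : 0 < n) :
    ‖iteratedDeriv n f 0‖ / n ! ≤ diam (f '' ball 0 R) / 2 / R ^ n := by
  refine le_div_pow_of_forall_lt hR fun r hr hrR => ?_
  have hr_bound := two_mul_norm_iteratedDeriv_le hr hrR hf hbdd hn
  rw [div_le_iff₀ (by positivity)]
  calc ‖iteratedDeriv n f 0‖ ≤ n ! * diam (f '' ball 0 R) / r ^ n / 2 := by linarith
    _ = _ := by ring

theorem poukka_diam_bound (f : ℂ → ℂ)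
    (hf : DifferentiableOn ℂ f (Metric.ball (0:ℂ) 1))
    (hbdd : Bornology.IsBounded (f '' Metric.ball (0:ℂ) 1)) :
    ∀ n : ℕ, 0 < n →
      ‖iteratedDeriv n f 0‖ / (n.factorial : ℝ) ≤
        (1/2) * Metric.diam (f '' Metric.ball (0:ℂ) 1) := fun n hn => by
  simpa [div_eq_inv_mul, mul_comm] using
    norm_iteratedDeriv_div_factorial_le_diam one_pos hf hbdd hn
end

section
/- Hadamard's three circles theorem: if f is holomorphic on the annulus {r₁ < |z| < r₂} and continuous on its closure, and M(r) denotes the maximum of |f| on the circle |z| = r, then for r₁ ≤ r ≤ r₂: M(r)^{log(r₂/r₁)} ≤ M(r₁)^{log(r₂/r)} · M(r₂)^{log(r/r₁)}. -/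
/-!
The exponential map sends the vertical strip `log r₁ ≤ re z ≤ log r₂` onto the closed annulus,
with `‖exp z‖ = exp (re z)`. Applying Hadamard's three lines theorem to `f ∘ exp` on that strip
bounds `|f|` on the circle `|z| = r` by `M(r₁) ^ (1 - t) * M(r₂) ^ t` with
`t = log (r / r₁) / log (r₂ / r₁)`; raising this to the power `log (r₂ / r₁)` gives the claim.
-/

open Set Metric Complex HadamardThreeLines

theorem isCompact_annulus {E : Type*} [NormedAddCommGroup E] [ProperSpace E] (r₁ r₂ : ℝ) :
    IsCompact {z : E | r₁ ≤ ‖z‖ ∧ ‖z‖ ≤ r₂} :=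
  (isCompact_closedBall (0 : E) r₂).of_isClosed_subset
    ((isClosed_le continuous_const continuous_norm).inter
      (isClosed_le continuous_norm continuous_const))
    fun _ hz => mem_closedBall_zero_iff.mpr hz.2

theorem closure_verticalStrip {l u : ℝ} (hlu : l < u) :
    closure (verticalStrip l u) = verticalClosedStrip l u := by
  rw [verticalStrip, closure_preimage_re, closure_Ioo hlu.ne, verticalClosedStrip]

section ExpStrip

variable {r r₁ r₂ : ℝ}

theorem mapsTo_exp_verticalStrip (h₁ : 0 < r₁) (h₂ : 0 < r₂) :
    MapsTo exp (verticalStrip (Real.log r₁) (Real.log r₂)) {z : ℂ | r₁ < ‖z‖ ∧ ‖z‖ < r₂} :=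
  fun z hz => by
    change r₁ < ‖exp z‖ ∧ ‖exp z‖ < r₂
    rw [norm_exp]
    exact ⟨(Real.log_lt_iff_lt_exp h₁).mp hz.1, (Real.lt_log_iff_exp_lt h₂).mp hz.2⟩

theorem mapsTo_exp_verticalClosedStrip (h₁ : 0 < r₁) (h₂ : 0 < r₂) :
    MapsTo exp (verticalClosedStrip (Real.log r₁) (Real.log r₂))
      {z : ℂ | r₁ ≤ ‖z‖ ∧ ‖z‖ ≤ r₂} :=
  fun z hz => by
    change r₁ ≤ ‖exp z‖ ∧ ‖exp z‖ ≤ r₂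
    rw [norm_exp]
    exact ⟨(Real.log_le_iff_le_exp h₁).mp hz.1, (Real.le_log_iff_exp_le h₂).mp hz.2⟩

theorem mapsTo_exp_re_preimage_log (hr : 0 < r) :
    MapsTo exp (re ⁻¹' {Real.log r}) (sphere 0 r) :=
  fun z hz => by
    rw [mem_sphere_zero_iff_norm, norm_exp, show z.re = Real.log r from hz, Real.exp_log hr]

end ExpStrip

section ThreeCircles

variable {E : Type*} [NormedAddCommGroup E] {f : ℂ → E} {r₁ r₂ a b : ℝ}

theorem diffContOnCl_comp_exp [NormedSpace ℂ E] (h₁ : 0 < r₁) (h₁₂ : r₁ < r₂)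
    (hf : DifferentiableOn ℂ f {z : ℂ | r₁ < ‖z‖ ∧ ‖z‖ < r₂})
    (hc : ContinuousOn f {z : ℂ | r₁ ≤ ‖z‖ ∧ ‖z‖ ≤ r₂}) :
    DiffContOnCl ℂ (f ∘ exp) (verticalStrip (Real.log r₁) (Real.log r₂)) where
  differentiableOn :=
    hf.comp differentiable_exp.differentiableOn (mapsTo_exp_verticalStrip h₁ (h₁.trans h₁₂))
  continuousOn := by
    rw [closure_verticalStrip (Real.log_lt_log h₁ h₁₂)]
    exact hc.comp continuous_exp.continuousOn
      (mapsTo_exp_verticalClosedStrip h₁ (h₁.trans h₁₂))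

theorem bddAbove_norm_comp_exp (h₁ : 0 < r₁) (h₂ : 0 < r₂)
    (hc : ContinuousOn f {z : ℂ | r₁ ≤ ‖z‖ ∧ ‖z‖ ≤ r₂}) :
    BddAbove ((norm ∘ f ∘ exp) '' verticalClosedStrip (Real.log r₁) (Real.log r₂)) := by
  refine ((isCompact_annulus r₁ r₂).image_of_continuousOn hc.norm).bddAbove.mono ?_
  rintro _ ⟨z, hz, rfl⟩
  exact ⟨exp z, mapsTo_exp_verticalClosedStrip h₁ h₂ hz, rfl⟩

theorem norm_le_of_three_circles [NormedSpace ℂ E] (h₁ : 0 < r₁) (h₁₂ : r₁ < r₂)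
    (hf : DifferentiableOn ℂ f {z : ℂ | r₁ < ‖z‖ ∧ ‖z‖ < r₂})
    (hc : ContinuousOn f {z : ℂ | r₁ ≤ ‖z‖ ∧ ‖z‖ ≤ r₂})
    (ha : ∀ z ∈ sphere (0 : ℂ) r₁, ‖f z‖ ≤ a) (hb : ∀ z ∈ sphere (0 : ℂ) r₂, ‖f z‖ ≤ b)
    {w : ℂ} (hw : ‖w‖ ∈ Icc r₁ r₂) :
    ‖f w‖ ≤ a ^ (Real.log (r₂ / ‖w‖) / Real.log (r₂ / r₁)) *
      b ^ (Real.log (‖w‖ / r₁) / Real.log (r₂ / r₁)) := by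
  have h₂ : 0 < r₂ := h₁.trans h₁₂
  have hw₀ : 0 < ‖w‖ := h₁.trans_le hw.1
  have hlog : log w ∈ verticalClosedStrip (Real.log r₁) (Real.log r₂) := by
    rw [verticalClosedStrip, mem_preimage, log_re]
    exact ⟨Real.log_le_log h₁ hw.1, Real.log_le_log hw₀ hw.2⟩
  have hthree := norm_le_interp_of_mem_verticalClosedStrip' (Real.log_lt_log h₁ h₁₂) hlog
    (diffContOnCl_comp_exp h₁ h₁₂ hf hc) (bddAbove_norm_comp_exp h₁ h₂ hc)
    (fun z hz => ha _ (mapsTo_exp_re_preimage_log h₁ hz))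
    (fun z hz => hb _ (mapsTo_exp_re_preimage_log h₂ hz))
  rw [Function.comp_apply, exp_log (norm_pos_iff.mp hw₀), log_re] at hthree
  have hL : Real.log r₂ - Real.log r₁ ≠ 0 := (sub_pos.mpr (Real.log_lt_log h₁ h₁₂)).ne'
  rw [Real.log_div h₂.ne' hw₀.ne', Real.log_div hw₀.ne' h₁.ne', Real.log_div h₂.ne' h₁.ne']
  convert hthree using 3
  field_simp
  ring

end ThreeCircles

theorem rpow_le_mul_rpow_of_le_mul_rpow_div {m a b s u L : ℝ} (hm : 0 ≤ m) (ha : 0 ≤ a)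
    (hb : 0 ≤ b) (hL : 0 < L) (h : m ≤ a ^ (s / L) * b ^ (u / L)) :
    m ^ L ≤ a ^ s * b ^ u :=
  calc m ^ L ≤ (a ^ (s / L) * b ^ (u / L)) ^ L := Real.rpow_le_rpow hm h hL.le
    _ = a ^ s * b ^ u := by
      rw [Real.mul_rpow (Real.rpow_nonneg ha _) (Real.rpow_nonneg hb _), ← Real.rpow_mul ha,
        ← Real.rpow_mul hb, div_mul_cancel₀ _ hL.ne', div_mul_cancel₀ _ hL.ne']

/-- Hadamard's three circles theorem. -/
theorem hadamard_three_circles (r₁ r₂ : ℝ) (h₁ : 0 < r₁) (h₁₂ : r₁ < r₂)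
    (f : ℂ → ℂ)
    (hf : DifferentiableOn ℂ f {z : ℂ | r₁ < ‖z‖ ∧ ‖z‖ < r₂})
    (hc : ContinuousOn f {z : ℂ | r₁ ≤ ‖z‖ ∧ ‖z‖ ≤ r₂})
    (M : ℝ → ℝ)
    (hM : ∀ r ∈ Set.Icc r₁ r₂,
      IsGreatest ((fun z => ‖f z‖) '' Metric.sphere (0:ℂ) r) (M r)) :
    ∀ r ∈ Set.Icc r₁ r₂,
      M r ^ Real.log (r₂ / r₁) ≤
        M r₁ ^ Real.log (r₂ / r) * M r₂ ^ Real.log (r / r₁) := by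
  have hM_nonneg : ∀ s ∈ Icc r₁ r₂, 0 ≤ M s := fun s hs => by
    obtain ⟨⟨w, -, hw⟩, -⟩ := hM s hs
    exact hw ▸ norm_nonneg _
  have hr₁ : r₁ ∈ Icc r₁ r₂ := left_mem_Icc.mpr h₁₂.le
  have hr₂ : r₂ ∈ Icc r₁ r₂ := right_mem_Icc.mpr h₁₂.le
  intro r hr
  obtain ⟨⟨w, hw, hwM⟩, -⟩ := hM r hr
  rw [mem_sphere_zero_iff_norm] at hw
  subst hw
  rw [← hwM]
  exact rpow_le_mul_rpow_of_le_mul_rpow_div (norm_nonneg _) (hM_nonneg r₁ hr₁) (hM_nonneg r₂ hr₂)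
    (Real.log_pos ((one_lt_div h₁).mpr h₁₂))
    (norm_le_of_three_circles h₁ h₁₂ hf hc (fun z hz => (hM r₁ hr₁).2 ⟨z, hz, rfl⟩)
      (fun z hz => (hM r₂ hr₂).2 ⟨z, hz, rfl⟩) hr)
end

section
/- Distance-ratio metric contraction for polyharmonic mappings: Let F(z) = Σ_{n=1}^p |z|^{2(n-1)} Σ_j (a_{n,j}z^j + conj(b_{n,j})conj(z)^j) be polyharmonic on the unit disk, and suppose there exists M > 0 with F(D) ⊂ D_M and Σ_{n=1}^p Σ_{j=1}^∞ (|a_{n,j}| + |b_{n,j}|) ≤ M. Then for all z, w ∈ D: j_{D_M}(F(z), F(w)) ≤ j_D(z, w). -/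
/-! Write `r = max ‖z‖ ‖w‖ < 1`. The term `|u|^{2(n-1)} (a u^{j+1} + conj b conj u^{j+1})` is
homogeneous of degree `k + 1`, `k = 2(n-1) + j`: with `c = |a| + |b|` it is bounded by
`c |u|^{k+1}` and is `c (k+1) r^k`-Lipschitz on the disk of radius `r`. Summing gives, with
`S = ∑ c (k+1) r^k`, `|F z - F w| ≤ S |z - w|` and `|F u| ≤ ∑ c r^{k+1}` for `|u| ≤ r`.
Comparing with the geometric sum `1 + r + ⋯ + r^k` shows `(1 - r)(k+1) r^k + r^{k+1} ≤ 1`, hence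
`(1 - r) S ≤ M - |F u|` for `u = z, w`, and the ratio in `j_{D_M}(F z, F w)` is at most
`|z - w| / (1 - r)`, the ratio in `j_D(z, w)`. -/

open Metric Finset

/-- The distance ratio metric of the disk of radius `R` centered at the origin. -/
noncomputable def jBall (R : ℝ) (z w : ℂ) : ℝ :=
  Real.log (1 + dist z w / min (R - ‖z‖) (R - ‖w‖))

open ComplexConjugate

theorem norm_pow_sub_pow_le {R : Type*} [NormedCommRing R] [NormOneClass R] (x y : R) (n : ℕ) :
    ‖x ^ n - y ^ n‖ ≤ ‖x - y‖ * n * max ‖x‖ ‖y‖ ^ (n - 1) := by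
  set r := max ‖x‖ ‖y‖
  have hterm : ∀ i ∈ range n, ‖x ^ i * y ^ (n - 1 - i)‖ ≤ r ^ (n - 1) := fun i hi => by
    rw [← pow_mul_pow_sub r (Nat.le_sub_one_of_lt (mem_range.1 hi))]
    refine (norm_mul_le _ _).trans (mul_le_mul ?_ ?_ (norm_nonneg _) (by positivity))
    · exact (norm_pow_le _ _).trans (pow_le_pow_left₀ (norm_nonneg _) (le_max_left _ _) _)
    · exact (norm_pow_le _ _).trans (pow_le_pow_left₀ (norm_nonneg _) (le_max_right _ _) _)
  calc ‖x ^ n - y ^ n‖ ≤ ‖∑ i ∈ range n, x ^ i * y ^ (n - 1 - i)‖ * ‖x - y‖ := by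
        rw [← geom_sum₂_mul]; exact norm_mul_le _ _
    _ ≤ (n * r ^ (n - 1)) * ‖x - y‖ := by
        gcongr
        exact (norm_sum_le _ _).trans ((sum_le_sum hterm).trans_eq (by simp))
    _ = ‖x - y‖ * n * r ^ (n - 1) := by ring

theorem one_sub_mul_mul_pow_add_pow_succ_le_one {r : ℝ} (h₀ : 0 ≤ r) (h₁ : r ≤ 1) (k : ℕ) :
    (1 - r) * ((k + 1) * r ^ k) + r ^ (k + 1) ≤ 1 := by
  have hk : ((k : ℝ) + 1) * r ^ k ≤ ∑ i ∈ range (k + 1), r ^ i := by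
    calc ((k : ℝ) + 1) * r ^ k = ∑ _i ∈ range (k + 1), r ^ k := by simp
      _ ≤ ∑ i ∈ range (k + 1), r ^ i := sum_le_sum fun i hi =>
          pow_le_pow_of_le_one h₀ h₁ (Nat.lt_succ_iff.1 (mem_range.1 hi))
  have := mul_le_mul_of_nonneg_left hk (sub_nonneg.2 h₁)
  rw [mul_neg_geom_sum] at this
  linarith

theorem norm_ofReal_norm_pow_mul_pow_sub_le (z w : ℂ) (p q : ℕ) :
    ‖(‖z‖ : ℂ) ^ p * z ^ (q + 1) - (‖w‖ : ℂ) ^ p * w ^ (q + 1)‖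
      ≤ ((p + q : ℕ) + 1) * max ‖z‖ ‖w‖ ^ (p + q) * ‖z - w‖ := by
  set r := max ‖z‖ ‖w‖
  have hr : 0 ≤ r := (norm_nonneg z).trans (le_max_left _ _)
  have hnorm : ‖(‖z‖ : ℂ) - ‖w‖‖ ≤ ‖z - w‖ := by
    rw [← Complex.ofReal_sub, Complex.norm_real]
    exact abs_norm_sub_norm_le z w
  have h₁ : ‖(‖z‖ : ℂ) ^ p - (‖w‖ : ℂ) ^ p‖ ≤ ‖z - w‖ * p * r ^ (p - 1) := by
    simpa [r] using (norm_pow_sub_pow_le (‖z‖ : ℂ) ‖w‖ p).trans (by gcongr <;> simp)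
  have h₂ : ‖z ^ (q + 1) - w ^ (q + 1)‖ ≤ ‖z - w‖ * (q + 1) * r ^ q := by
    simpa using norm_pow_sub_pow_le z w (q + 1)
  have hz : ‖z ^ (q + 1)‖ ≤ r ^ (q + 1) := by
    rw [norm_pow]; exact pow_le_pow_left₀ (norm_nonneg _) (le_max_left _ _) _
  have hw : ‖(‖w‖ : ℂ) ^ p‖ ≤ r ^ p := by
    rw [norm_pow, Complex.norm_real, Real.norm_of_nonneg (norm_nonneg _)]
    exact pow_le_pow_left₀ (norm_nonneg _) (le_max_right _ _) _
  have hp : (p : ℝ) * r ^ (p - 1) * r = p * r ^ p := by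
    rcases p with _ | p <;> simp [pow_succ, mul_assoc]
  calc ‖(‖z‖ : ℂ) ^ p * z ^ (q + 1) - (‖w‖ : ℂ) ^ p * w ^ (q + 1)‖
      = ‖((‖z‖ : ℂ) ^ p - (‖w‖ : ℂ) ^ p) * z ^ (q + 1)
          + (‖w‖ : ℂ) ^ p * (z ^ (q + 1) - w ^ (q + 1))‖ := by ring_nf
    _ ≤ ‖z - w‖ * p * r ^ (p - 1) * r ^ (q + 1) + r ^ p * (‖z - w‖ * (q + 1) * r ^ q) := by
        refine (norm_add_le _ _).trans (add_le_add ?_ ?_) <;> rw [norm_mul] <;> gcongr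
    _ = ((p + q : ℕ) + 1) * r ^ (p + q) * ‖z - w‖ := by
        rw [pow_succ, pow_add]
        push_cast
        linear_combination r ^ q * ‖z - w‖ * hp

theorem norm_mul_add_conj_mul_conj_le (α β x : ℂ) :
    ‖α * x + conj β * conj x‖ ≤ (‖α‖ + ‖β‖) * ‖x‖ := by
  refine (norm_add_le _ _).trans_eq ?_
  simp only [norm_mul, Complex.norm_conj]
  ring

noncomputable def polyharmonicTerm (a b : ℕ → ℂ) (m j : ℕ) (u : ℂ) : ℂ :=
  (‖u‖ : ℂ) ^ (2 * m) * (a (j + 1) * u ^ (j + 1) + conj (b (j + 1)) * conj u ^ (j + 1))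

theorem polyharmonicTerm_eq (a b : ℕ → ℂ) (m j : ℕ) (u : ℂ) :
    polyharmonicTerm a b m j u = a (j + 1) * ((‖u‖ : ℂ) ^ (2 * m) * u ^ (j + 1))
      + conj (b (j + 1)) * conj ((‖u‖ : ℂ) ^ (2 * m) * u ^ (j + 1)) := by
  simp only [polyharmonicTerm, map_mul, map_pow, Complex.conj_ofReal]
  ring

theorem norm_polyharmonicTerm_le (a b : ℕ → ℂ) (m j : ℕ) (u : ℂ) :
    ‖polyharmonicTerm a b m j u‖ ≤ (‖a (j + 1)‖ + ‖b (j + 1)‖) * ‖u‖ ^ (2 * m + j + 1) := by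
  refine (polyharmonicTerm_eq a b m j u ▸ norm_mul_add_conj_mul_conj_le _ _ _).trans_eq ?_
  simp [pow_add, mul_assoc]

theorem norm_polyharmonicTerm_sub_le (a b : ℕ → ℂ) (m j : ℕ) (z w : ℂ) :
    ‖polyharmonicTerm a b m j z - polyharmonicTerm a b m j w‖
      ≤ (‖a (j + 1)‖ + ‖b (j + 1)‖) * (((2 * m + j : ℕ) + 1) * max ‖z‖ ‖w‖ ^ (2 * m + j))
        * ‖z - w‖ := by
  have := norm_mul_add_conj_mul_conj_le (a (j + 1)) (b (j + 1))
    ((‖z‖ : ℂ) ^ (2 * m) * z ^ (j + 1) - (‖w‖ : ℂ) ^ (2 * m) * w ^ (j + 1))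
  rw [map_sub, mul_sub, mul_sub, sub_add_sub_comm, ← polyharmonicTerm_eq,
    ← polyharmonicTerm_eq] at this
  refine this.trans ?_
  rw [mul_assoc]
  gcongr
  exact norm_ofReal_norm_pow_mul_pow_sub_le z w (2 * m) j

noncomputable def seriesLipConst {ι : Type*} (c : ι → ℝ) (k : ι → ℕ) (r : ℝ) : ℝ :=
  ∑' i, c i * ((k i + 1) * r ^ k i)

section HomogeneousSeries

variable {ι : Type*} {t : ι → ℂ → ℂ} {c : ι → ℝ} {k : ι → ℕ}

theorem coeff_nonneg_of_norm_le (hnorm : ∀ i u, ‖t i u‖ ≤ c i * ‖u‖ ^ (k i + 1)) (i : ι) :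
    0 ≤ c i :=
  (norm_nonneg _).trans ((hnorm i 1).trans_eq (by simp))

theorem summable_of_norm_le_one (hc : Summable c)
    (hnorm : ∀ i u, ‖t i u‖ ≤ c i * ‖u‖ ^ (k i + 1)) {u : ℂ} (hu : ‖u‖ ≤ 1) :
    Summable fun i => t i u :=
  hc.of_norm_bounded fun i => (hnorm i u).trans <|
    mul_le_of_le_one_right (coeff_nonneg_of_norm_le hnorm i) (pow_le_one₀ (norm_nonneg u) hu)

theorem summable_seriesLipConst (hc : Summable c) (hc₀ : ∀ i, 0 ≤ c i) {r : ℝ} (h₀ : 0 ≤ r)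
    (h₁ : r < 1) : Summable fun i => c i * ((k i + 1) * r ^ k i) := by
  have hr : 0 < 1 - r := sub_pos.2 h₁
  refine (hc.mul_right (1 / (1 - r))).of_nonneg_of_le
    (fun i => mul_nonneg (hc₀ i) (by positivity)) fun i => ?_
  gcongr
  · exact hc₀ i
  rw [le_div_iff₀ hr]
  nlinarith [one_sub_mul_mul_pow_add_pow_succ_le_one h₀ h₁.le (k i), pow_nonneg h₀ (k i + 1)]

theorem norm_tsum_sub_tsum_le (hc : Summable c)
    (hnorm : ∀ i u, ‖t i u‖ ≤ c i * ‖u‖ ^ (k i + 1))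
    (hlip : ∀ i z w, ‖t i z - t i w‖ ≤ c i * ((k i + 1) * max ‖z‖ ‖w‖ ^ k i) * ‖z - w‖)
    {z w : ℂ} (h : max ‖z‖ ‖w‖ < 1) :
    ‖∑' i, t i z - ∑' i, t i w‖ ≤ seriesLipConst c k (max ‖z‖ ‖w‖) * ‖z - w‖ := by
  have hz := summable_of_norm_le_one hc hnorm (le_max_left _ _ |>.trans h.le)
  have hw := summable_of_norm_le_one hc hnorm (le_max_right _ _ |>.trans h.le)
  have hL := summable_seriesLipConst (k := k) hc (coeff_nonneg_of_norm_le hnorm)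
    ((norm_nonneg z).trans (le_max_left _ _)) h
  rw [← hz.tsum_sub hw, seriesLipConst, ← tsum_mul_right]
  exact tsum_of_norm_bounded (hL.mul_right _).hasSum (hlip · z w)

theorem one_sub_mul_seriesLipConst_add_norm_tsum_le (hc : Summable c)
    (hnorm : ∀ i u, ‖t i u‖ ≤ c i * ‖u‖ ^ (k i + 1)) {r : ℝ} (h₁ : r < 1) {u : ℂ}
    (hu : ‖u‖ ≤ r) :
    (1 - r) * seriesLipConst c k r + ‖∑' i, t i u‖ ≤ ∑' i, c i := by
  have hc₀ := coeff_nonneg_of_norm_le hnorm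
  have h₀ : 0 ≤ r := (norm_nonneg u).trans hu
  have hL := (summable_seriesLipConst (k := k) hc hc₀ h₀ h₁).mul_left (1 - r)
  have hU : Summable fun i => c i * ‖u‖ ^ (k i + 1) :=
    hc.of_nonneg_of_le (fun i => by have := hc₀ i; positivity)
      fun i => mul_le_of_le_one_right (hc₀ i) (pow_le_one₀ (norm_nonneg u) (hu.trans h₁.le))
  calc (1 - r) * seriesLipConst c k r + ‖∑' i, t i u‖
      ≤ ∑' i, (1 - r) * (c i * ((k i + 1) * r ^ k i)) + ∑' i, c i * ‖u‖ ^ (k i + 1) := by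
        rw [seriesLipConst, tsum_mul_left]
        gcongr
        exact tsum_of_norm_bounded hU.hasSum (hnorm · u)
    _ ≤ ∑' i, c i := by
        rw [← hL.tsum_add hU]
        refine hL.add hU |>.tsum_le_tsum (fun i => ?_) hc
        have hpow : ‖u‖ ^ (k i + 1) ≤ r ^ (k i + 1) := pow_le_pow_left₀ (norm_nonneg u) hu _
        nlinarith [one_sub_mul_mul_pow_add_pow_succ_le_one h₀ h₁.le (k i), hc₀ i,
          mul_le_mul_of_nonneg_left hpow (hc₀ i)]

end HomogeneousSeries

theorem jBall_le_jBall_of_dist_le {R R' S : ℝ} {z w z' w' : ℂ}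
    (hmin : 0 < min (R - ‖z‖) (R - ‖w‖)) (hdist : dist z' w' ≤ S * dist z w)
    (hz' : min (R - ‖z‖) (R - ‖w‖) * S ≤ R' - ‖z'‖)
    (hw' : min (R - ‖z‖) (R - ‖w‖) * S ≤ R' - ‖w'‖) :
    jBall R' z' w' ≤ jBall R z w := by
  set m := min (R - ‖z‖) (R - ‖w‖)
  rcases le_or_gt S 0 with hS | hS
  · have : dist z' w' = 0 :=
      le_antisymm (hdist.trans (mul_nonpos_of_nonpos_of_nonneg hS dist_nonneg)) dist_nonneg
    rw [jBall, this, zero_div, add_zero, Real.log_one]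
    exact Real.log_nonneg (by simpa using div_nonneg dist_nonneg hmin.le)
  · have hm' : m * S ≤ min (R' - ‖z'‖) (R' - ‖w'‖) := le_min hz' hw'
    have hpos : 0 < m * S := mul_pos hmin hS
    refine Real.log_le_log ?_ (add_le_add_right ?_ 1)
    · have := div_nonneg (dist_nonneg (x := z') (y := w')) (hpos.le.trans hm'); positivity
    calc dist z' w' / min (R' - ‖z'‖) (R' - ‖w'‖) ≤ S * dist z w / (m * S) :=
          div_le_div₀ (by positivity) hdist hpos hm'
      _ = dist z w / m := by field_simp

theorem distance_ratio_contraction_general (p : ℕ)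
    (a b : ℕ → ℕ → ℂ) (F : ℂ → ℂ) (M : ℝ)
    (hF : ∀ z ∈ Metric.ball (0:ℂ) 1,
      F z = ∑ n ∈ Finset.Icc 1 p, (‖z‖ : ℂ)^(2*(n-1)) *
        ∑' j : ℕ, (a n (j+1) * z^(j+1) +
          (starRingEnd ℂ) (b n (j+1)) * ((starRingEnd ℂ) z)^(j+1)))
    (hcs : ∀ n, Summable (fun j : ℕ => ‖a n (j+1)‖ + ‖b n (j+1)‖))
    (hcoef : ∑ n ∈ Finset.Icc 1 p,
        ∑' j : ℕ, (‖a n (j+1)‖ + ‖b n (j+1)‖) ≤ M) :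
    ∀ z ∈ Metric.ball (0:ℂ) 1, ∀ w ∈ Metric.ball (0:ℂ) 1,
      jBall M (F z) (F w) ≤ jBall 1 z w := by
  have hF' : ∀ u ∈ ball (0 : ℂ) 1,
      F u = ∑ n ∈ Icc 1 p, ∑' j, polyharmonicTerm (a n) (b n) (n - 1) j u := fun u hu => by
    simp only [hF u hu, ← tsum_mul_left, polyharmonicTerm]
  intro z hz w hw
  set r := max ‖z‖ ‖w‖
  have hr : r < 1 := max_lt (mem_ball_zero_iff.1 hz) (mem_ball_zero_iff.1 hw)
  set S := ∑ n ∈ Icc 1 p,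
    seriesLipConst (fun j => ‖a n (j + 1)‖ + ‖b n (j + 1)‖) (fun j => 2 * (n - 1) + j) r
  have hboundary : ∀ u ∈ ball (0 : ℂ) 1, ‖u‖ ≤ r → (1 - r) * S ≤ M - ‖F u‖ := by
    intro u hu hur
    have := sum_le_sum fun n (_ : n ∈ Icc 1 p) =>
      one_sub_mul_seriesLipConst_add_norm_tsum_le (hcs n)
        (norm_polyharmonicTerm_le (a n) (b n) (n - 1)) hr hur
    rw [sum_add_distrib, ← mul_sum] at this
    rw [hF' u hu]
    linarith [norm_sum_le (Icc 1 p) fun n => ∑' j, polyharmonicTerm (a n) (b n) (n - 1) j u]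
  have hmin : min (1 - ‖z‖) (1 - ‖w‖) = 1 - r := min_sub_sub_left 1 ‖z‖ ‖w‖
  refine jBall_le_jBall_of_dist_le (S := S) (by rw [hmin]; linarith) ?_
    (hmin ▸ hboundary z hz (le_max_left _ _)) (hmin ▸ hboundary w hw (le_max_right _ _))
  rw [dist_eq_norm, dist_eq_norm, hF' z hz, hF' w hw, ← sum_sub_distrib, sum_mul]
  exact (norm_sum_le _ _).trans <| sum_le_sum fun n _ =>
    norm_tsum_sub_tsum_le (hcs n) (norm_polyharmonicTerm_le (a n) (b n) (n - 1))
      (norm_polyharmonicTerm_sub_le (a n) (b n) (n - 1)) hr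

theorem distance_ratio_contraction (p : ℕ) (hp : 1 ≤ p)
    (a b : ℕ → ℕ → ℂ) (F : ℂ → ℂ) (M : ℝ) (hM : 0 < M)
    (hsum : ∀ z ∈ Metric.ball (0:ℂ) 1, ∀ n,
      Summable (fun j : ℕ =>
        a n (j+1) * z^(j+1) + (starRingEnd ℂ) (b n (j+1)) * ((starRingEnd ℂ) z)^(j+1)))
    (hF : ∀ z ∈ Metric.ball (0:ℂ) 1,
      F z = ∑ n ∈ Finset.Icc 1 p, (‖z‖ : ℂ)^(2*(n-1)) *
        ∑' j : ℕ, (a n (j+1) * z^(j+1) +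
          (starRingEnd ℂ) (b n (j+1)) * ((starRingEnd ℂ) z)^(j+1)))
    (hcs : ∀ n, Summable (fun j : ℕ => ‖a n (j+1)‖ + ‖b n (j+1)‖))
    (hcoef : ∑ n ∈ Finset.Icc 1 p,
        ∑' j : ℕ, (‖a n (j+1)‖ + ‖b n (j+1)‖) ≤ M)
    (hFD : Set.MapsTo F (Metric.ball (0:ℂ) 1) (Metric.ball (0:ℂ) M)) :
    ∀ z ∈ Metric.ball (0:ℂ) 1, ∀ w ∈ Metric.ball (0:ℂ) 1,
      jBall M (F z) (F w) ≤ jBall 1 z w :=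
  distance_ratio_contraction_general p a b F M hF hcs hcoef
end

section
/- Lower bound on distance to boundary: for F(z) = Σ_{n=1}^p |z|^{2(n-1)} Σ_j (a_{n,j}z^j + conj(b_{n,j})conj(z)^j) with Σ_{n,j}(|a_{n,j}|+|b_{n,j}|) ≤ M, one has M − |F(z)| ≥ (1 − |z|) · Σ_{n=1}^p Σ_{j=1}^∞ (|a_{n,j}|+|b_{n,j}|) Σ_{i=0}^{2n+j−3} |z|^i for all z in the unit disk. -/
/-!
With `r = ‖z‖ < 1` and `c n j = ‖a n (j+1)‖ + ‖b n (j+1)‖`, the triangle inequality gives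
`‖F z‖ ≤ ∑ₙ ∑ⱼ c n j * r ^ (2n + j - 1)`, while `(1 - r) * ∑_{i < k} r ^ i = 1 - r ^ k` turns the
left-hand side into `∑ₙ ∑ⱼ c n j - ∑ₙ ∑ⱼ c n j * r ^ (2n + j - 1)`. The bound `∑ₙ ∑ⱼ c n j ≤ M`
finishes the proof.
-/

open Finset

lemma Summable.mul_pow_of_nonneg {c : ℕ → ℝ} (hc : Summable c) (hc0 : ∀ j, 0 ≤ c j)
    {r : ℝ} (hr0 : 0 ≤ r) (hr1 : r ≤ 1) (e : ℕ → ℕ) :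
    Summable fun j => c j * r ^ e j :=
  hc.of_nonneg_of_le (fun j => mul_nonneg (hc0 j) (pow_nonneg hr0 _))
    fun j => mul_le_of_le_one_right (hc0 j) (pow_le_one₀ hr0 hr1)

lemma norm_mul_pow_add_conj_mul_conj_pow_le (α β z : ℂ) (k : ℕ) :
    ‖α * z ^ k + (starRingEnd ℂ) β * (starRingEnd ℂ) z ^ k‖ ≤ (‖α‖ + ‖β‖) * ‖z‖ ^ k := by
  calc ‖α * z ^ k + (starRingEnd ℂ) β * (starRingEnd ℂ) z ^ k‖
      ≤ ‖α * z ^ k‖ + ‖(starRingEnd ℂ) β * (starRingEnd ℂ) z ^ k‖ := norm_add_le _ _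
    _ = (‖α‖ + ‖β‖) * ‖z‖ ^ k := by
      simp only [norm_mul, norm_pow, Complex.norm_conj]
      ring

lemma norm_tsum_mul_pow_add_conj_mul_conj_pow_le {α β : ℕ → ℂ}
    (hs : Summable fun j => ‖α j‖ + ‖β j‖) {z : ℂ} (hz : ‖z‖ ≤ 1) (e : ℕ → ℕ) :
    ‖∑' j, (α j * z ^ e j + (starRingEnd ℂ) (β j) * (starRingEnd ℂ) z ^ e j)‖ ≤
      ∑' j, (‖α j‖ + ‖β j‖) * ‖z‖ ^ e j :=
  tsum_of_norm_bounded
    (hs.mul_pow_of_nonneg (fun _ => by positivity) (norm_nonneg z) hz e).hasSum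
    fun j => norm_mul_pow_add_conj_mul_conj_pow_le _ _ _ _

lemma one_sub_mul_tsum_mul_geom_sum {c : ℕ → ℝ} (hc : Summable c) (hc0 : ∀ j, 0 ≤ c j)
    {r : ℝ} (hr0 : 0 ≤ r) (hr1 : r ≤ 1) (e : ℕ → ℕ) :
    (1 - r) * ∑' j, c j * ∑ i ∈ range (e j), r ^ i = ∑' j, c j - ∑' j, c j * r ^ e j := by
  rw [← tsum_mul_left, ← hc.tsum_sub (hc.mul_pow_of_nonneg hc0 hr0 hr1 e)]
  congr 1 with j
  linear_combination c j * mul_neg_geom_sum r (e j)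

lemma norm_polyharmonic_le (p : ℕ) (a b : ℕ → ℕ → ℂ)
    (hcs : ∀ n, Summable fun j : ℕ => ‖a n (j+1)‖ + ‖b n (j+1)‖) {z : ℂ} (hz : ‖z‖ ≤ 1) :
    ‖∑ n ∈ Icc 1 p, (‖z‖ : ℂ) ^ (2*(n-1)) *
        ∑' j : ℕ, (a n (j+1) * z ^ (j+1) +
          (starRingEnd ℂ) (b n (j+1)) * (starRingEnd ℂ) z ^ (j+1))‖ ≤
      ∑ n ∈ Icc 1 p, ∑' j : ℕ, (‖a n (j+1)‖ + ‖b n (j+1)‖) * ‖z‖ ^ (2*n + j - 1) := by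
  refine (norm_sum_le _ _).trans (sum_le_sum fun n hn => ?_)
  have hn1 : 1 ≤ n := (mem_Icc.mp hn).1
  rw [norm_mul, norm_pow, Complex.norm_real, Real.norm_of_nonneg (norm_nonneg z)]
  calc ‖z‖ ^ (2*(n-1)) * ‖∑' j : ℕ, (a n (j+1) * z ^ (j+1) +
          (starRingEnd ℂ) (b n (j+1)) * (starRingEnd ℂ) z ^ (j+1))‖
      ≤ ‖z‖ ^ (2*(n-1)) * ∑' j : ℕ, (‖a n (j+1)‖ + ‖b n (j+1)‖) * ‖z‖ ^ (j+1) :=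
        mul_le_mul_of_nonneg_left
          (norm_tsum_mul_pow_add_conj_mul_conj_pow_le (hcs n) hz (· + 1)) (by positivity)
    _ = ∑' j : ℕ, (‖a n (j+1)‖ + ‖b n (j+1)‖) * ‖z‖ ^ (2*n + j - 1) := by
        rw [← tsum_mul_left]
        congr 1 with j
        rw [show 2*n + j - 1 = 2*(n-1) + (j+1) by omega, pow_add]
        ring

theorem boundary_distance_lower_bound_general (p : ℕ)
    (a b : ℕ → ℕ → ℂ) (F : ℂ → ℂ) (M : ℝ)
    (hF : ∀ z ∈ Metric.ball (0:ℂ) 1,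
      F z = ∑ n ∈ Finset.Icc 1 p, (‖z‖ : ℂ)^(2*(n-1)) *
        ∑' j : ℕ, (a n (j+1) * z^(j+1) +
          (starRingEnd ℂ) (b n (j+1)) * ((starRingEnd ℂ) z)^(j+1)))
    (hcs : ∀ n, Summable (fun j : ℕ => ‖a n (j+1)‖ + ‖b n (j+1)‖))
    (hcoef : ∑ n ∈ Finset.Icc 1 p,
        ∑' j : ℕ, (‖a n (j+1)‖ + ‖b n (j+1)‖) ≤ M) :
    ∀ z ∈ Metric.ball (0:ℂ) 1,
      (1 - ‖z‖) *
          ∑ n ∈ Finset.Icc 1 p, ∑' j : ℕ,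
            (‖a n (j+1)‖ + ‖b n (j+1)‖) *
              ∑ i ∈ Finset.range (2*n + j - 1), (‖z‖)^i ≤
        M - ‖F z‖ := by
  intro z hz
  have hz1 : ‖z‖ ≤ 1 := (mem_ball_zero_iff.mp hz).le
  have hF_le := norm_polyharmonic_le p a b hcs hz1
  rw [← hF z hz] at hF_le
  rw [mul_sum, sum_congr rfl fun n _ => one_sub_mul_tsum_mul_geom_sum (hcs n)
    (fun _ => by positivity) (norm_nonneg z) hz1 (fun j => 2*n + j - 1), sum_sub_distrib]
  linarith

theorem boundary_distance_lower_bound (p : ℕ) (hp : 1 ≤ p)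
    (a b : ℕ → ℕ → ℂ) (F : ℂ → ℂ) (M : ℝ) (hM : 0 < M)
    (hsum : ∀ z ∈ Metric.ball (0:ℂ) 1, ∀ n,
      Summable (fun j : ℕ =>
        a n (j+1) * z^(j+1) + (starRingEnd ℂ) (b n (j+1)) * ((starRingEnd ℂ) z)^(j+1)))
    (hF : ∀ z ∈ Metric.ball (0:ℂ) 1,
      F z = ∑ n ∈ Finset.Icc 1 p, (‖z‖ : ℂ)^(2*(n-1)) *
        ∑' j : ℕ, (a n (j+1) * z^(j+1) +
          (starRingEnd ℂ) (b n (j+1)) * ((starRingEnd ℂ) z)^(j+1)))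
    (hcs : ∀ n, Summable (fun j : ℕ => ‖a n (j+1)‖ + ‖b n (j+1)‖))
    (hcoef : ∑ n ∈ Finset.Icc 1 p,
        ∑' j : ℕ, (‖a n (j+1)‖ + ‖b n (j+1)‖) ≤ M) :
    ∀ z ∈ Metric.ball (0:ℂ) 1,
      (1 - ‖z‖) *
          ∑ n ∈ Finset.Icc 1 p, ∑' j : ℕ,
            (‖a n (j+1)‖ + ‖b n (j+1)‖) *
              ∑ i ∈ Finset.range (2*n + j - 1), (‖z‖)^i ≤
        M - ‖F z‖ :=
  boundary_distance_lower_bound_general p a b F M hF hcs hcoef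
end
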